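/- arXiv:2004.01182 — 3 statements merged into one kernel-verified Lean document; each statement's English description precedes it below -/
import Mathlib

section
/- In the setup below, for every j ∈ ℕ the set {v ∈ V₁⁻ : j is the largest index such that v crosses U_j} is finite. -/
open Set

variable {X : Type*}

/-- A wall: a subset with nonempty complement and nonempty itself. -/
def IsWall (h : Set X) : Prop := h.Nonempty ∧ hᶜ.Nonempty

/-- Walls `h` and `k` cross. -/
def Crosses (h k : Set X) : Prop :=
  (h ∩ k).Nonempty ∧ (h ∩ kᶜ).Nonempty ∧ (hᶜ ∩ k).Nonempty ∧ (hᶜ ∩ kᶜ).Nonempty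

/-- The wall `u` lies in the halfspace `H` of the wall `w`. -/
def LiesIn (u H w : Set X) : Prop := u ≠ w ∧ (u ⊆ H ∨ uᶜ ⊆ H)

/-- The wall `w` separates the walls `u` and `v`. -/
def Separates (w u v : Set X) : Prop :=
  u ≠ v ∧ u ≠ w ∧ v ≠ w ∧
  ∃ u' v' w', (u' = u ∨ u' = uᶜ) ∧ (v' = v ∨ v' = vᶜ) ∧ (w' = w ∨ w' = wᶜ) ∧
    u' ⊆ w' ∧ v' ⊆ w'ᶜ

/-- `S` contains a facing triple. -/
def HasFacingTriple (S : Set (Set X)) : Prop :=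
  ∃ a ∈ S, ∃ b ∈ S, ∃ c ∈ S, a ≠ b ∧ a ≠ c ∧ b ≠ c ∧
    ∃ a' b' c', (a' = a ∨ a' = aᶜ) ∧ (b' = b ∨ b' = bᶜ) ∧ (c' = c ∨ c' = cᶜ) ∧
      Disjoint a' b' ∧ Disjoint a' c' ∧ Disjoint b' c'

/-- `S` is inseparable with respect to the wall collection `W`. -/
def InseparableIn (W S : Set (Set X)) : Prop :=
  ∀ u ∈ S, ∀ v ∈ S, ∀ w ∈ W, Separates w u v → w ∈ S

/-- `S` is unidirectional: for each wall `w ∈ S`, at most one of the two halfspaces of `w`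
contains infinitely many walls of `S`. -/
def Unidirectional (S : Set (Set X)) : Prop :=
  ∀ w ∈ S, {u ∈ S | LiesIn u w w}.Finite ∨ {u ∈ S | LiesIn u wᶜ w}.Finite

/-- `V` is a UBS in the wall collection `W`. -/
def IsUBS (W V : Set (Set X)) : Prop :=
  V ⊆ W ∧ V.Infinite ∧ InseparableIn W V ∧ Unidirectional V ∧ ¬ HasFacingTriple V

/-- Almost-equivalence of sets of walls. -/
def AlmostEq (S T : Set (Set X)) : Prop := (S \ T).Finite ∧ (T \ S).Finite

/-- `U` is a minimal UBS in `W`. -/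
def MinUBS (W U : Set (Set X)) : Prop :=
  IsUBS W U ∧ ∀ U', IsUBS W U' → U' ⊆ U → AlmostEq U' U

/-- `A ≺ B`: every wall of `B` crosses all but finitely many walls of `A`. -/
def Prec (A B : Set (Set X)) : Prop := ∀ b ∈ B, {a ∈ A | ¬ Crosses b a}.Finite

/-- Distinct members of `W` determine distinct partitions. -/
def Admissible (W : Set (Set X)) : Prop := ∀ h ∈ W, ∀ k ∈ W, h ≠ k → h ≠ kᶜ

/-- No infinite subset of `W` consists of pairwise-crossing walls. -/
def NoInfCross (W : Set (Set X)) : Prop := ∀ S ⊆ W, S.Pairwise Crosses → S.Finite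

/-- `W` has dimension at most `D`: every pairwise-crossing subset has cardinality at most `D`. -/
def DimLE (W : Set (Set X)) (D : ℕ) : Prop :=
  ∀ S ⊆ W, S.Pairwise Crosses → S.Finite ∧ S.ncard ≤ D

/-- `c` is a chain: an injective sequence of walls with `c n` separating `c (n-1)` and
`c (n+1)` for `n ≥ 1`. -/
def IsChainSeq (c : ℕ → Set X) : Prop :=
  Function.Injective c ∧ ∀ n, Separates (c (n + 1)) (c n) (c (n + 2))

/-- The chain `c` is inextensible in `S`: no wall of `S` has a halfspace containing every
term of `c`. -/
def InextensibleIn (S : Set (Set X)) (c : ℕ → Set X) : Prop :=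
  ¬ ∃ w ∈ S, ∃ H, (H = w ∨ H = wᶜ) ∧ ∀ n, LiesIn (c n) H w

/-- The inseparable closure in `W` of a set `C` of walls. -/
def insepClosure (W C : Set (Set X)) : Set (Set X) :=
  ⋂₀ {S | C ⊆ S ∧ S ⊆ W ∧ InseparableIn W S}

/-- The sub-collection of `V ∖ U₁` (where `U₁` is the inseparable closure of the chain `c`)
consisting of walls crossing all but finitely many walls of `U₁`. -/
def V1plus (W V : Set (Set X)) (c : ℕ → Set X) : Set (Set X) :=
  {v ∈ V \ insepClosure W (Set.range c) |
    {u ∈ insepClosure W (Set.range c) | ¬ Crosses v u}.Finite}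

/-- The complement of `V₁⁺` in `V₁ = V ∖ U₁`. -/
def V1minus (W V : Set (Set X)) (c : ℕ → Set X) : Set (Set X) :=
  (V \ insepClosure W (Set.range c)) \ V1plus W V c

/-- If some halfspace of `u` is contained in some halfspace of `v`, then `v` and `u` do not
cross. -/
lemma not_crosses_of_halfspace_subset {v u a k : Set X}
    (ha : a = u ∨ a = uᶜ) (hk : k = v ∨ k = vᶜ) (h : a ⊆ k) : ¬ Crosses v u := by
  rintro ⟨⟨x1, h1⟩, ⟨x2, h2⟩, ⟨x3, h3⟩, ⟨x4, h4⟩⟩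
  rcases ha with rfl | rfl <;> rcases hk with rfl | rfl
  · exact h3.1 (h h3.2)
  · exact (h h1.2) h1.1
  · exact h4.1 (h h4.2)
  · exact (h h2.2) h2.1

lemma crosses_symm {h k : Set X} (H : Crosses h k) : Crosses k h := by
  obtain ⟨⟨x1, h1⟩, ⟨x2, h2⟩, ⟨x3, h3⟩, ⟨x4, h4⟩⟩ := H
  exact ⟨⟨x1, h1.2, h1.1⟩, ⟨x3, h3.2, h3.1⟩, ⟨x2, h2.2, h2.1⟩, ⟨x4, h4.2, h4.1⟩⟩

/-- A halfspace of a wall contained in another halfspace of the same wall equals it. -/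
lemma halfspace_eq_of_subset {w a b : Set X} (hw : IsWall w)
    (ha : a = w ∨ a = wᶜ) (hb : b = w ∨ b = wᶜ) (h : a ⊆ b) : a = b := by
  rcases ha with rfl | rfl <;> rcases hb with rfl | rfl
  · rfl
  · obtain ⟨x, hx⟩ := hw.1
    exact absurd hx (h hx)
  · obtain ⟨x, hx⟩ := hw.2
    exact absurd (h hx) hx
  · rfl

/-- For each `j`, only finitely many walls of `V₁⁻` have `j` as the largest index of a term
of the chain that they cross. -/
theorem v1minus_fiber_finite (W : Set (Set X))
    (hWc : W.Countable) (hWwall : ∀ h ∈ W, IsWall h)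
    (hWadm : Admissible W) (hWnic : NoInfCross W)
    (V : Set (Set X)) (hV : IsUBS W V)
    (c : ℕ → Set X) (hc : IsChainSeq c) (hcV : ∀ n, c n ∈ V)
    (hinext : InextensibleIn V c)
    (hU1min : MinUBS W (insepClosure W (Set.range c)))
    (hU1V : insepClosure W (Set.range c) ⊆ V) :
    ∀ j : ℕ,
      {v ∈ V1minus W V c | Crosses v (c j) ∧ ∀ j' > j, ¬ Crosses v (c j')}.Finite := by
  intro j
  obtain ⟨cinj, csep⟩ := hc
  obtain ⟨hVW, -, -, huni, -⟩ := hV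
  -- the separation of `c j` and `c (j+2)` by `c (j+1)`
  obtain ⟨-, -, -, a, b0, κ, ha, hb0, hκ, haκ, hb0κ⟩ := csep j
  -- `κᶜ` as a halfspace of `c (j+1)`
  have hκc : κᶜ = c (j + 1) ∨ κᶜ = (c (j + 1))ᶜ := by
    rcases hκ with h | h
    · right; rw [h]
    · left; rw [h, compl_compl]
  have hac : aᶜ = c j ∨ aᶜ = (c j)ᶜ := by
    rcases ha with h | h
    · right; rw [h]
    · left; rw [h, compl_compl]
  -- the tail of the chain lies in nested halfspaces inside `κᶜ`
  have key : ∀ n : ℕ, ∃ k K : Set X,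
      (k = c (j + 1 + n) ∨ k = (c (j + 1 + n))ᶜ) ∧
      (K = c (j + 2 + n) ∨ K = (c (j + 2 + n))ᶜ) ∧ K ⊆ k ∧ k ⊆ κᶜ := by
    intro n
    induction n with
    | zero => exact ⟨κᶜ, b0, hκc, hb0, hb0κ, subset_rfl⟩
    | succ n ih =>
      obtain ⟨k, K, hk, hK, hKk, hkκ⟩ := ih
      obtain ⟨-, -, -, α, β, μ, hα, hβ, hμ, hαμ, hβμ⟩ := csep (j + 1 + n)
      rw [show j + 1 + n + 1 = j + 2 + n by omega] at hμ
      rw [show j + 1 + n + 2 = j + 3 + n by omega] at hβ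
      rw [show j + 1 + (n + 1) = j + 2 + n by omega,
        show j + 2 + (n + 1) = j + 3 + n by omega]
      have hμK : μ = K ∨ μ = Kᶜ := by
        rcases hμ with h | h <;> rcases hK with h' | h'
        · left; rw [h, h']
        · right; rw [h, h', compl_compl]
        · right; rw [h, h']
        · left; rw [h, h']
      rcases hμK with hEq | hEq
      · -- impossible: it would force two distinct chain walls to share a halfspace
        exfalso
        have hwall : IsWall (c (j + 1 + n)) := hWwall _ (hVW (hcV _))
        have hαk : α ⊆ k := (hEq ▸ hαμ).trans hKk
        have hαeqk : α = k := halfspace_eq_of_subset hwall hα hk hαk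
        have hkK : k = K := le_antisymm (hαeqk ▸ (hEq ▸ hαμ)) hKk
        have hne : c (j + 1 + n) ≠ c (j + 2 + n) := fun h => by
          have := cinj h; omega
        have hmem1 : c (j + 1 + n) ∈ W := hVW (hcV _)
        have hmem2 : c (j + 2 + n) ∈ W := hVW (hcV _)
        rcases hk with h1 | h1 <;> rcases hK with h2 | h2
        · exact hne (h1 ▸ h2 ▸ hkK)
        · exact hWadm _ hmem1 _ hmem2 hne (h1 ▸ h2 ▸ hkK)
        · exact hWadm _ hmem2 _ hmem1 hne.symm (h2 ▸ h1 ▸ hkK.symm)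
        · exact hne (compl_injective (h1 ▸ h2 ▸ hkK))
      · refine ⟨K, β, hK, hβ, ?_, hKk.trans hkκ⟩
        rw [hEq, compl_compl] at hβμ
        exact hβμ
  -- infinitely many walls of `V` lie in `κᶜ`
  have hinf : {u | u ∈ V ∧ LiesIn u κᶜ (c (j + 1))}.Infinite := by
    refine Set.infinite_of_injective_forall_mem (f := fun n : ℕ => c (j + 2 + n)) ?_ ?_
    · intro m n h
      have := cinj h; omega
    · intro n
      obtain ⟨k, K, hk, hK, hKk, hkκ⟩ := key n
      refine ⟨hcV _, fun h => by have := cinj h; omega, ?_⟩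
      rcases hK with h | h
      · left; show c (j + 2 + n) ⊆ κᶜ; rw [← h]; exact hKk.trans hkκ
      · right; show (c (j + 2 + n))ᶜ ⊆ κᶜ; rw [← h]; exact hKk.trans hkκ
  -- hence only finitely many walls of `V` lie in `κ`, by unidirectionality at `c (j+1)`
  have hfin : {u | u ∈ V ∧ LiesIn u κ (c (j + 1))}.Finite := by
    rcases hκ with h | h
    · subst h
      rcases huni _ (hcV (j + 1)) with hf | hf
      · exact hf
      · exact (hinf hf).elim
    · subst h
      simp only [compl_compl] at hinf
      rcases huni _ (hcV (j + 1)) with hf | hf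
      · exact (hinf hf).elim
      · exact hf
  -- every wall in the fiber lies in `κ`
  refine hfin.subset ?_
  rintro v ⟨hv1, hcross, hnc⟩
  have hvV : v ∈ V := hv1.1.1
  have hnc' : ¬ Crosses v (c (j + 1)) := hnc (j + 1) (Nat.lt_succ_self j)
  -- `v` cannot have a halfspace inside `κᶜ`, since it crosses `c j` and `a ⊆ κ`
  have hexcl : ∀ s : Set X, (s = v ∨ s = vᶜ) → s ⊆ κᶜ → False := by
    intro s hs hsub
    exact not_crosses_of_halfspace_subset hs hac
      (hsub.trans (compl_subset_compl.2 haκ)) (crosses_symm hcross)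
  -- `v ≠ c (j+1)` since `c (j+1)` does not cross `c j`
  have hnotcj : ¬ Crosses (c (j + 1)) (c j) := not_crosses_of_halfspace_subset ha hκ haκ
  have hne : v ≠ c (j + 1) := fun h => hnotcj (h ▸ hcross)
  -- `v` does not cross `c (j+1)`, so it lies in one of its halfspaces
  have h1 : ∀ {s t : Set X}, ¬ s ⊆ tᶜ → (s ∩ t).Nonempty := by
    intro s t h
    obtain ⟨x, hx, hx'⟩ := Set.not_subset.1 h
    exact ⟨x, hx, by simpa using hx'⟩
  have h1' : ∀ {s t : Set X}, ¬ s ⊆ t → (s ∩ tᶜ).Nonempty := by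
    intro s t h
    obtain ⟨x, hx, hx'⟩ := Set.not_subset.1 h
    exact ⟨x, hx, hx'⟩
  have hcases : v ⊆ (c (j + 1))ᶜ ∨ v ⊆ c (j + 1) ∨ vᶜ ⊆ (c (j + 1))ᶜ ∨ vᶜ ⊆ c (j + 1) := by
    by_contra hcon
    push_neg at hcon
    exact hnc' ⟨h1 hcon.1, h1' hcon.2.1, h1 hcon.2.2.1, h1' hcon.2.2.2⟩
  refine ⟨hvV, hne, ?_⟩
  rcases hcases with h | h | h | h
  · rcases hκ with hκ1 | hκ1
    · exact (hexcl v (Or.inl rfl) (by rw [hκ1]; exact h)).elim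
    · left; rw [hκ1]; exact h
  · rcases hκ with hκ1 | hκ1
    · left; rw [hκ1]; exact h
    · exact (hexcl v (Or.inl rfl) (by rw [hκ1, compl_compl]; exact h)).elim
  · rcases hκ with hκ1 | hκ1
    · exact (hexcl vᶜ (Or.inr rfl) (by rw [hκ1]; exact h)).elim
    · right; rw [hκ1]; exact h
  · rcases hκ with hκ1 | hκ1
    · right; rw [hκ1]; exact h
    · exact (hexcl vᶜ (Or.inr rfl) (by rw [hκ1, compl_compl]; exact h)).elim
end

section
/- In the setup below, if V₁⁻ is infinite then V₁⁻ ≺ U₁, i.e., every wall of U₁ crosses all but finitely many walls of V₁⁻. -/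
open Set

variable {X : Type*}

/-!
The terms of the chain have nested halfspaces `h 0 ⊆ h 1 ⊆ ⋯`, and every wall `u` of `U₁` has a
halfspace `a ⊆ h I` for some `I` (walls with a halfspace squeezed between two `h i` form an
inseparable set). So the tail of the chain lies in `aᶜ`, and since `V` is unidirectional only
finitely many walls of `V` lie in `a`. It remains to see that a wall `v ∈ V₁⁻` missing `u` lies
in `a`. By minimality of `U₁`, `v` crosses only finitely many walls of `U₁`, so it eventually
misses the chain. Were a halfspace `b` of `v` disjoint from `a`, then for large `n` the wall `v`
could neither separate `u` from `c n` (as `v ∉ U₁`) nor form a facing triple with them, so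
`h n ⊆ bᶜ`, and the whole chain would lie in one halfspace of `v`, against inextensibility.
-/

open Filter Function

def IsHalfspaceOf (a w : Set X) : Prop := a = w ∨ a = wᶜ

namespace IsHalfspaceOf

variable {a b w x H : Set X}

lemma compl (ha : IsHalfspaceOf a w) : IsHalfspaceOf aᶜ w := by
  rcases ha with rfl | rfl
  · exact Or.inr rfl
  · exact Or.inl (compl_compl _)

lemma symm (ha : IsHalfspaceOf a w) : IsHalfspaceOf w a := by
  rcases ha with rfl | rfl
  · exact Or.inl rfl
  · exact Or.inr (compl_compl _).symm

lemma eq_or_eq_compl (ha : IsHalfspaceOf a w) (hb : IsHalfspaceOf b w) : a = b ∨ a = bᶜ := by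
  rcases ha with rfl | rfl <;> rcases hb with rfl | rfl <;> simp

lemma nonempty (ha : IsHalfspaceOf a w) (hw : IsWall w) : a.Nonempty := by
  rcases ha with rfl | rfl
  exacts [hw.1, hw.2]

lemma liesIn (ha : IsHalfspaceOf a x) (hxw : x ≠ w) (haH : a ⊆ H) : LiesIn x H w := by
  refine ⟨hxw, ?_⟩
  rcases ha with rfl | rfl
  exacts [Or.inl haH, Or.inr haH]

end IsHalfspaceOf

lemma Crosses.inter_nonempty {x y a b : Set X} (hxy : Crosses x y) (ha : IsHalfspaceOf a x)
    (hb : IsHalfspaceOf b y) : (a ∩ b).Nonempty := by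
  obtain ⟨h1, h2, h3, h4⟩ := hxy
  rcases ha with rfl | rfl <;> rcases hb with rfl | rfl
  exacts [h1, h2, h3, h4]

lemma exists_disjoint_halfspaces_of_not_crosses {x y : Set X} (hxy : ¬Crosses x y) :
    ∃ a b, IsHalfspaceOf a x ∧ IsHalfspaceOf b y ∧ Disjoint a b := by
  by_contra! hall
  have meet {a b : Set X} (ha : IsHalfspaceOf a x) (hb : IsHalfspaceOf b y) : (a ∩ b).Nonempty :=
    not_disjoint_iff_nonempty_inter.mp (hall a b ha hb)
  exact hxy ⟨meet (Or.inl rfl) (Or.inl rfl), meet (Or.inl rfl) (Or.inr rfl),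
    meet (Or.inr rfl) (Or.inl rfl), meet (Or.inr rfl) (Or.inr rfl)⟩

lemma subset_compl_or_separates_or_hasFacingTriple {u v w a b k : Set X}
    (ha : IsHalfspaceOf a u) (hb : IsHalfspaceOf b v) (hk : IsHalfspaceOf k w)
    (hane : a.Nonempty) (hak : a ⊆ k) (hab : Disjoint a b) (hnvw : ¬Crosses v w)
    (huv : u ≠ v) (huw : u ≠ w) (hvw : v ≠ w) :
    k ⊆ bᶜ ∨ Separates v u w ∨ HasFacingTriple {u, v, w} := by
  obtain ⟨p, q, hp, hq, hpq⟩ := exists_disjoint_halfspaces_of_not_crosses hnvw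
  rcases hp.eq_or_eq_compl hb with hpb | hpb <;> rcases hq.eq_or_eq_compl hk with hqk | hqk <;>
    subst p q
  · exact Or.inl (subset_compl_iff_disjoint_left.mpr hpq)
  · exact Or.inr (Or.inr ⟨u, by simp, v, by simp, w, by simp, huv, huw, hvw, a, b, kᶜ, ha, hb,
      hk.compl, hab, disjoint_compl_right_iff_subset.mpr hak, hpq⟩)
  · obtain ⟨t, ht⟩ := hane
    exact (disjoint_left.mp hab ht (disjoint_compl_left_iff_subset.mp hpq (hak ht))).elim
  · exact Or.inr (Or.inl ⟨huw, huv, hvw.symm, a, kᶜ, bᶜ, ha, hk.compl, hb.compl,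
      subset_compl_iff_disjoint_right.mpr hab, subset_compl_iff_disjoint_left.mpr hpq⟩)

lemma Unidirectional.mono {S T : Set (Set X)} (hT : Unidirectional T) (hST : S ⊆ T) :
    Unidirectional S := fun w hw =>
  (hT w (hST hw)).imp (fun hf => hf.subset fun _ hu => ⟨hST hu.1, hu.2⟩)
    (fun hf => hf.subset fun _ hu => ⟨hST hu.1, hu.2⟩)

lemma Unidirectional.finite_of_infinite_compl {S : Set (Set X)} (hS : Unidirectional S)
    {w H : Set X} (hw : w ∈ S) (hH : IsHalfspaceOf H w)
    (hinf : {u ∈ S | LiesIn u Hᶜ w}.Infinite) : {u ∈ S | LiesIn u H w}.Finite := by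
  rcases hH with hHw | hHw <;> subst H
  · exact (hS w hw).resolve_right hinf
  · rw [compl_compl] at hinf
    exact (hS w hw).resolve_left hinf

lemma HasFacingTriple.mono {S T : Set (Set X)} (hS : HasFacingTriple S) (hST : S ⊆ T) :
    HasFacingTriple T := by
  obtain ⟨a, ha, b, hb, c, hc, hfacing⟩ := hS
  exact ⟨a, hST ha, b, hST hb, c, hST hc, hfacing⟩

lemma IsUBS.of_subset {W V S : Set (Set X)} (hV : IsUBS W V) (hSV : S ⊆ V) (hS : S.Infinite)
    (hSW : InseparableIn W S) : IsUBS W S :=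
  ⟨hSV.trans hV.1, hS, hSW, hV.2.2.2.1.mono hSV, fun hft => hV.2.2.2.2 (hft.mono hSV)⟩

lemma InseparableIn.sep_crosses {W S : Set (Set X)} (hS : InseparableIn W S) (v : Set X) :
    InseparableIn W {u ∈ S | Crosses v u} := by
  rintro x ⟨hxS, hvx⟩ y ⟨hyS, hvy⟩ w hw hsep
  refine ⟨hS x hxS y hyS w hw hsep, by_contra fun hvw => ?_⟩
  obtain ⟨-, -, -, x', y', w', hx', hy', hw', hxw, hyw⟩ := hsep
  obtain ⟨a, b, ha, hb, hab⟩ := exists_disjoint_halfspaces_of_not_crosses hvw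
  rcases hb.eq_or_eq_compl hw' with hbw | hbw <;> subst b
  · exact not_disjoint_iff_nonempty_inter.mpr (hvx.inter_nonempty ha hx') (hab.mono_right hxw)
  · exact not_disjoint_iff_nonempty_inter.mpr (hvy.inter_nonempty ha hy') (hab.mono_right hyw)

/-- The walls of `U` crossing `v` form an inseparable subset of `U`, so if infinite they are almost
all of `U`. -/
lemma MinUBS.finite_crosses_of_infinite_not_crosses {W U : Set (Set X)} (hU : MinUBS W U)
    {v : Set X} (hinf : {u ∈ U | ¬Crosses v u}.Infinite) : {u ∈ U | Crosses v u}.Finite := by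
  by_contra hcrossing
  have hsub : {u ∈ U | Crosses v u} ⊆ U := sep_subset U _
  have hae := hU.2 _ (hU.1.of_subset hsub hcrossing (hU.1.2.2.1.sep_crosses v)) hsub
  exact hinf (hae.2.subset fun u hu => ⟨hu.1, fun hvu => hu.2 hvu.2⟩)

lemma subset_insepClosure (W C : Set (Set X)) : C ⊆ insepClosure W C :=
  subset_sInter fun _ hS => hS.1

lemma insepClosure_subset {W C S : Set (Set X)} (hCS : C ⊆ S) (hSW : S ⊆ W)
    (hS : InseparableIn W S) : insepClosure W C ⊆ S :=
  sInter_subset_of_mem ⟨hCS, hSW, hS⟩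

lemma Admissible.eq_of_halfspace_eq {W : Set (Set X)} (hW : Admissible W) {x y a : Set X}
    (hx : x ∈ W) (hy : y ∈ W) (hax : IsHalfspaceOf a x) (hay : IsHalfspaceOf a y) : x = y := by
  by_contra hxy
  exact (hax.symm.eq_or_eq_compl hay.symm).elim hxy (hW x hx y hy hxy)

lemma Admissible.halfspace_eq_of_subset {W : Set (Set X)} (hW : Admissible W)
    {x y p q x' y' : Set X} (hx : x ∈ W) (hy : y ∈ W) (hxy : x ≠ y) (hpne : p.Nonempty)
    (hp : IsHalfspaceOf p x) (hq : IsHalfspaceOf q y) (hpq : p ⊆ q)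
    (hx' : IsHalfspaceOf x' x) (hy' : IsHalfspaceOf y' y) (hxy' : x' ⊆ y') : y' = q := by
  rcases hy'.eq_or_eq_compl hq with hyq | hyq
  · exact hyq
  subst y'
  rcases hx'.eq_or_eq_compl hp with hxp | hxp <;> subst x'
  · obtain ⟨t, ht⟩ := hpne
    exact (hxy' ht (hpq ht)).elim
  · have hqp : p = q := subset_antisymm hpq (compl_subset_compl.mp hxy')
    exact (hxy (hW.eq_of_halfspace_eq hx hy hp (hqp ▸ hq))).elim

lemma IsChainSeq.exists_monotone_halfspaces {W : Set (Set X)} {c : ℕ → Set X}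
    (hc : IsChainSeq c) (hW : Admissible W) (hcW : ∀ n, c n ∈ W) (hwall : ∀ n, IsWall (c n)) :
    ∃ h : ℕ → Set X, Monotone h ∧ ∀ n, IsHalfspaceOf (h n) (c n) := by
  choose a b k ha hb hk hak hbk using fun n => (hc.2 n).2.2.2
  -- `k n ⊆ (b n)ᶜ`, so `(b n)ᶜ` is the halfspace of `c (n + 2)` beyond `k n`
  let h : ℕ → Set X := fun
    | 0 => a 0
    | 1 => k 0
    | n + 2 => (b n)ᶜ
  have hh : ∀ n, IsHalfspaceOf (h n) (c n)
    | 0 => ha 0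
    | 1 => hk 0
    | n + 2 => IsHalfspaceOf.compl (hb n)
  have hstep (n : ℕ) (hn : h n ⊆ h (n + 1)) : h (n + 1) ⊆ h (n + 2) := by
    have hkn : k n = h (n + 1) := hW.halfspace_eq_of_subset (hcW n) (hcW (n + 1))
      (hc.1.ne n.succ_ne_self.symm) ((hh n).nonempty (hwall n)) (hh n) (hh (n + 1)) hn
      (ha n) (hk n) (hak n)
    rw [← hkn]
    exact subset_compl_comm.mp (hbk n)
  refine ⟨h, monotone_nat_of_le_succ fun n => ?_, hh⟩
  induction n with
  | zero => exact hak 0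
  | succ n ih => exact hstep n ih

def squeezedWalls (W : Set (Set X)) (h : ℕ → Set X) : Set (Set X) :=
  {w ∈ W | ∃ a, IsHalfspaceOf a w ∧ ∃ i j, h i ⊆ a ∧ a ⊆ h j}

lemma squeezedWalls_side {W : Set (Set X)} {h : ℕ → Set X} {x x' w' : Set X}
    (hx : x ∈ squeezedWalls W h) (hx' : IsHalfspaceOf x' x) (hxw : x' ⊆ w') :
    (∃ i, h i ⊆ w') ∨ ∃ j, w'ᶜ ⊆ h j := by
  obtain ⟨-, a, ha, i, j, hia, haj⟩ := hx
  rcases hx'.eq_or_eq_compl ha with hxa | hxa <;> subst x'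
  · exact Or.inl ⟨i, hia.trans hxw⟩
  · exact Or.inr ⟨j, (compl_subset_comm.mp hxw).trans haj⟩

lemma inseparableIn_squeezedWalls {W : Set (Set X)} {h : ℕ → Set X} (hmono : Monotone h)
    (h0 : (h 0).Nonempty) (hcompl : ∀ n, (h n)ᶜ.Nonempty) :
    InseparableIn W (squeezedWalls W h) := by
  rintro x hx y hy w hw ⟨-, -, -, x', y', w', hx', hy', hw', hxw, hyw⟩
  have hy'w := squeezedWalls_side hy hy' hyw
  rw [compl_compl] at hy'w
  obtain ⟨i, hi⟩ | ⟨j, hj⟩ := squeezedWalls_side hx hx' hxw <;>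
    obtain ⟨k, hk⟩ | ⟨l, hl⟩ := hy'w
  · obtain ⟨t, ht⟩ := h0
    exact (hk (hmono (Nat.zero_le k) ht) (hi (hmono (Nat.zero_le i) ht))).elim
  · exact ⟨hw, w', hw', i, l, hi, hl⟩
  · exact ⟨hw, w'ᶜ, IsHalfspaceOf.compl hw', k, j, hk, hj⟩
  · obtain ⟨t, ht⟩ := hcompl (max j l)
    by_cases htw : t ∈ w'
    · exact (ht (hmono (le_max_right j l) (hl htw))).elim
    · exact (ht (hmono (le_max_left j l) (hj htw))).elim

lemma exists_halfspace_subset_of_mem_insepClosure {W : Set (Set X)} {c h : ℕ → Set X}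
    (hcW : ∀ n, c n ∈ W) (hwall : ∀ n, IsWall (c n)) (hmono : Monotone h)
    (hh : ∀ n, IsHalfspaceOf (h n) (c n)) {u : Set X} (hu : u ∈ insepClosure W (range c)) :
    ∃ a, IsHalfspaceOf a u ∧ ∃ j, a ⊆ h j := by
  have hsq : insepClosure W (range c) ⊆ squeezedWalls W h := by
    refine insepClosure_subset ?_ (sep_subset _ _) (inseparableIn_squeezedWalls hmono
      ((hh 0).nonempty (hwall 0)) fun n => (hh n).compl.nonempty (hwall n))
    rintro _ ⟨n, rfl⟩
    exact ⟨hcW n, h n, hh n, n, n, subset_rfl, subset_rfl⟩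
  obtain ⟨-, a, ha, -, j, -, haj⟩ := hsq hu
  exact ⟨a, ha, j, haj⟩

lemma Function.Injective.eventually_notMem_atTop {α : Type*} {c : ℕ → α} (hc : Injective c)
    {S : Set α} (hS : S.Finite) : ∀ᶠ n in atTop, c n ∉ S := by
  rw [← Nat.cofinite_eq_atTop]
  exact hc.tendsto_cofinite.eventually hS.eventually_cofinite_notMem

lemma Function.Injective.infinite_of_eventually_mem {α : Type*} {c : ℕ → α} (hc : Injective c)
    {S : Set α} (hS : ∀ᶠ n in atTop, c n ∈ S) : S.Infinite := by
  obtain ⟨N, hN⟩ := eventually_atTop.mp hS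
  exact infinite_of_injective_forall_mem (hc.comp (add_left_injective N))
    fun k => hN _ (Nat.le_add_left N k)

lemma InextensibleIn.not_eventually_subset {S : Set (Set X)} {c h : ℕ → Set X}
    (hinext : InextensibleIn S c) (hmono : Monotone h) (hh : ∀ n, IsHalfspaceOf (h n) (c n))
    {v H : Set X} (hv : v ∈ S) (hcv : ∀ n, c n ≠ v) (hH : IsHalfspaceOf H v) :
    ¬∀ᶠ n in atTop, h n ⊆ H := fun hev => by
  obtain ⟨N, hN⟩ := eventually_atTop.mp hev
  exact hinext ⟨v, hv, H, hH, fun n =>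
    (hh n).liesIn (hcv n) ((hmono (le_max_left n N)).trans (hN _ (le_max_right n N)))⟩

lemma not_disjoint_halfspace_of_eventually_not_crosses {W V U : Set (Set X)} {c h : ℕ → Set X}
    (hVW : V ⊆ W) (hUV : U ⊆ V) (hU : InseparableIn W U) (hcU : ∀ n, c n ∈ U)
    (hcinj : Injective c) (hVft : ¬HasFacingTriple V) (hinext : InextensibleIn V c)
    (hmono : Monotone h) (hh : ∀ n, IsHalfspaceOf (h n) (c n))
    {u v a b : Set X} {I : ℕ} (hu : u ∈ U) (ha : IsHalfspaceOf a u) (hane : a.Nonempty)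
    (haI : a ⊆ h I) (hv : v ∈ V \ U) (hb : IsHalfspaceOf b v)
    (hcross : ∀ᶠ n in atTop, ¬Crosses v (c n)) : ¬Disjoint a b := by
  intro hab
  have hcv (n : ℕ) : c n ≠ v := fun hcnv => hv.2 (hcnv ▸ hcU n)
  have huv : u ≠ v := fun huv => hv.2 (huv ▸ hu)
  refine hinext.not_eventually_subset hmono hh hv.1 hcv hb.compl ?_
  filter_upwards [eventually_ge_atTop I, hcinj.eventually_notMem_atTop (finite_singleton u),
    hcross] with n hIn hcnu hvn
  rcases subset_compl_or_separates_or_hasFacingTriple ha hb (hh n) hane (haI.trans (hmono hIn))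
    hab hvn huv (Ne.symm hcnu) (hcv n).symm with hsub | hsep | hft
  · exact hsub
  · exact absurd (hU u hu (c n) (hcU n) v (hVW hv.1) hsep) hv.2
  · exact absurd (hft.mono (by simp [insert_subset_iff, hUV hu, hv.1, hUV (hcU n)])) hVft

theorem v1minus_prec_U1_general (W : Set (Set X))
    (hWwall : ∀ h ∈ W, IsWall h)
    (hWadm : Admissible W)
    (V : Set (Set X)) (hV : IsUBS W V)
    (c : ℕ → Set X) (hc : IsChainSeq c) (hcV : ∀ n, c n ∈ V)
    (hinext : InextensibleIn V c)
    (hU1min : MinUBS W (insepClosure W (Set.range c)))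
    (hU1V : insepClosure W (Set.range c) ⊆ V) :
    Prec (V1minus W V c) (insepClosure W (Set.range c)) := by
  obtain ⟨hVW, -, -, hVuni, hVft⟩ := hV
  have hcW (n : ℕ) : c n ∈ W := hVW (hcV n)
  have hcwall (n : ℕ) : IsWall (c n) := hWwall _ (hcW n)
  have hcU (n : ℕ) : c n ∈ insepClosure W (range c) :=
    subset_insepClosure _ _ (mem_range_self n)
  obtain ⟨h, hmono, hh⟩ := hc.exists_monotone_halfspaces hWadm hcW hcwall
  intro u hu
  obtain ⟨a, ha, I, haI⟩ := exists_halfspace_subset_of_mem_insepClosure hcW hcwall hmono hh hu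
  have htail : {x ∈ V | LiesIn x aᶜ u}.Infinite := by
    refine hc.1.infinite_of_eventually_mem ?_
    filter_upwards [eventually_ge_atTop I, hc.1.eventually_notMem_atTop (finite_singleton u)]
      with n hIn hcnu
    exact ⟨hcV n, (hh n).compl.liesIn hcnu (compl_subset_compl.mpr (haI.trans (hmono hIn)))⟩
  refine (hVuni.finite_of_infinite_compl (hU1V hu) ha htail).subset ?_
  rintro v ⟨⟨hvV, hvplus⟩, hnuv⟩
  have hcross : ∀ᶠ n in atTop, ¬Crosses v (c n) := by
    filter_upwards [hc.1.eventually_notMem_atTop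
      (hU1min.finite_crosses_of_infinite_not_crosses fun hfin => hvplus ⟨hvV, hfin⟩)] with n hn
    exact fun hvn => hn ⟨hcU n, hvn⟩
  obtain ⟨a', b, ha', hb, hab⟩ := exists_disjoint_halfspaces_of_not_crosses hnuv
  rcases ha'.eq_or_eq_compl ha with ha'a | ha'a <;> subst a'
  · have hane : a.Nonempty := ha.nonempty (hWwall u (hVW (hU1V hu)))
    exact absurd hab (not_disjoint_halfspace_of_eventually_not_crosses hVW hU1V hU1min.1.2.2.1
      hcU hc.1 hVft hinext hmono hh hu ha hane haI hvV hb hcross)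
  · exact ⟨hvV.1, hb.liesIn (fun hvu => hvV.2 (hvu ▸ hu))
      (disjoint_compl_left_iff_subset.mp hab)⟩

/-- If `V₁⁻` is infinite then `V₁⁻ ≺ U₁`. -/
theorem v1minus_prec_U1 (W : Set (Set X))
    (hWc : W.Countable) (hWwall : ∀ h ∈ W, IsWall h)
    (hWadm : Admissible W) (hWnic : NoInfCross W)
    (V : Set (Set X)) (hV : IsUBS W V)
    (c : ℕ → Set X) (hc : IsChainSeq c) (hcV : ∀ n, c n ∈ V)
    (hinext : InextensibleIn V c)
    (hU1min : MinUBS W (insepClosure W (Set.range c)))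
    (hU1V : insepClosure W (Set.range c) ⊆ V)
    (hinf : (V1minus W V c).Infinite) :
    Prec (V1minus W V c) (insepClosure W (Set.range c)) :=
  v1minus_prec_U1_general W hWwall hWadm V hV c hc hcV hinext hU1min hU1V
end

section
/- There exist a set X, a countable collection 𝒲 of walls on X (distinct members determining distinct partitions) with no infinite subset of pairwise-crossing walls, a UBS V ⊆ 𝒲, a countably infinite family (U_i)_{i∈I} of pairwise disjoint minimal UBSs with V = ⋃_{i∈I} U_i, and a minimal UBS V' ⊆ V such that V' is not almost-equivalent to U_i for any i ∈ I. In particular, the uniqueness of the decomposition of a UBS into minimal UBSs can fail when no bound is imposed on the cardinality of sets of pairwise-crossing walls. -/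
open Set

variable {X : Type*}

/-! Take `X = ℕ × ℕ` and as walls the open quadrants `Q p = {q | p.1 < q.1 ∧ p.2 < q.2}`, so that
`Q p ⊆ Q q ↔ q ≤ p`. Any two quadrants meet and any two complements contain `(0, 0)`, so there are
no facing triples; crossing quadrants have incomparable corners, and `ℕ × ℕ` has no infinite
antichain. `Q w` separates `Q p` and `Q q` exactly when `w` lies strictly between `p` and `q`, so
inseparable families are the images of order-convex sets of corners, and an infinite order-convex
chain gives a minimal UBS, each of its sub-UBSs being a tail of it. The columns `{i} ×ˢ univ`
partition the corners, while the bottom row `univ ×ˢ {0}` meets every column in a single point. -/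

def quadrant (p : ℕ × ℕ) : Set (ℕ × ℕ) := {q | p.1 < q.1 ∧ p.2 < q.2}

lemma succ_mem_quadrant (p : ℕ × ℕ) : (p.1 + 1, p.2 + 1) ∈ quadrant p :=
  ⟨Nat.lt_succ_self _, Nat.lt_succ_self _⟩

lemma zero_notMem_quadrant (p : ℕ × ℕ) : (0, 0) ∉ quadrant p :=
  fun h => Nat.not_lt_zero _ h.1

lemma quadrant_subset_quadrant_iff {p q : ℕ × ℕ} : quadrant p ⊆ quadrant q ↔ q ≤ p := by
  refine ⟨fun h => ?_, fun h x hx => ⟨h.1.trans_lt hx.1, h.2.trans_lt hx.2⟩⟩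
  obtain ⟨h1, h2⟩ := h (succ_mem_quadrant p)
  exact ⟨Nat.lt_succ_iff.mp h1, Nat.lt_succ_iff.mp h2⟩

lemma quadrant_injective : Function.Injective quadrant := fun _ _ h =>
  le_antisymm (quadrant_subset_quadrant_iff.mp h.ge) (quadrant_subset_quadrant_iff.mp h.le)

lemma quadrant_inter_nonempty (p q : ℕ × ℕ) : (quadrant p ∩ quadrant q).Nonempty :=
  ⟨(p.1 + q.1 + 1, p.2 + q.2 + 1), ⟨by omega, by omega⟩, ⟨by omega, by omega⟩⟩

lemma not_disjoint_quadrant (p q : ℕ × ℕ) : ¬ Disjoint (quadrant p) (quadrant q) :=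
  not_disjoint_iff_nonempty_inter.mpr (quadrant_inter_nonempty p q)

lemma not_disjoint_compl_quadrant (p q : ℕ × ℕ) : ¬ Disjoint (quadrant p)ᶜ (quadrant q)ᶜ :=
  not_disjoint_iff.mpr ⟨(0, 0), zero_notMem_quadrant p, zero_notMem_quadrant q⟩

lemma isWall_quadrant (p : ℕ × ℕ) : IsWall (quadrant p) :=
  ⟨⟨_, succ_mem_quadrant p⟩, ⟨(0, 0), zero_notMem_quadrant p⟩⟩

lemma admissible_range_quadrant : Admissible (range quadrant) := by
  rintro _ ⟨p, rfl⟩ _ ⟨q, rfl⟩ - h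
  obtain ⟨z, hzp, hzq⟩ := quadrant_inter_nonempty p q
  exact (h ▸ hzp) hzq

section Halfspace

variable {u : Set (ℕ × ℕ)} {p w : ℕ × ℕ}

lemma le_of_halfspace_subset_quadrant (hu : u = quadrant p ∨ u = (quadrant p)ᶜ)
    (h : u ⊆ quadrant w) : w ≤ p := by
  rcases hu with rfl | rfl
  · exact quadrant_subset_quadrant_iff.mp h
  · exact absurd (h (zero_notMem_quadrant p)) (zero_notMem_quadrant w)

lemma le_of_halfspace_subset_compl_quadrant (hu : u = quadrant p ∨ u = (quadrant p)ᶜ)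
    (h : u ⊆ (quadrant w)ᶜ) : p ≤ w := by
  rcases hu with rfl | rfl
  · exact (not_disjoint_quadrant p w (subset_compl_iff_disjoint_right.mp h)).elim
  · exact quadrant_subset_quadrant_iff.mp (compl_subset_compl.mp h)

end Halfspace

lemma lt_lt_of_separates_quadrant {w p q : ℕ × ℕ}
    (h : Separates (quadrant w) (quadrant p) (quadrant q)) :
    (p < w ∧ w < q) ∨ (q < w ∧ w < p) := by
  obtain ⟨-, hpw, hqw, u', v', w', hu, hv, hw, hu', hv'⟩ := h
  have hpw : p ≠ w := fun h => hpw (h ▸ rfl)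
  have hqw : q ≠ w := fun h => hqw (h ▸ rfl)
  rcases hw with rfl | rfl
  · exact Or.inr ⟨(le_of_halfspace_subset_compl_quadrant hv hv').lt_of_ne hqw,
      (le_of_halfspace_subset_quadrant hu hu').lt_of_ne hpw.symm⟩
  · rw [compl_compl] at hv'
    exact Or.inl ⟨(le_of_halfspace_subset_compl_quadrant hu hu').lt_of_ne hpw,
      (le_of_halfspace_subset_quadrant hv hv').lt_of_ne hqw.symm⟩

lemma separates_quadrant_of_lt_of_lt {p w q : ℕ × ℕ} (hpw : p < w) (hwq : w < q) :
    Separates (quadrant w) (quadrant p) (quadrant q) :=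
  ⟨quadrant_injective.ne (hpw.trans hwq).ne, quadrant_injective.ne hpw.ne,
    quadrant_injective.ne hwq.ne', (quadrant p)ᶜ, quadrant q, (quadrant w)ᶜ,
    Or.inr rfl, Or.inl rfl, Or.inr rfl,
    compl_subset_compl.mpr (quadrant_subset_quadrant_iff.mpr hpw.le),
    (compl_compl (quadrant w)).symm ▸ quadrant_subset_quadrant_iff.mpr hwq.le⟩

section Subfamily

variable {S : Set (Set (ℕ × ℕ))}

lemma unidirectional_of_subset_range_quadrant (hS : S ⊆ range quadrant) : Unidirectional S := by
  intro _ hw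
  obtain ⟨p, rfl⟩ := hS hw
  refine Or.inr (((finite_Iic p).image quadrant).subset ?_)
  rintro u ⟨huS, -, hu⟩
  obtain ⟨q, rfl⟩ := hS huS
  rcases hu with h | h
  · exact ⟨q, le_of_halfspace_subset_compl_quadrant (Or.inl rfl) h, rfl⟩
  · exact ⟨q, le_of_halfspace_subset_compl_quadrant (Or.inr rfl) h, rfl⟩

-- Two halfspaces of the same kind always meet, and among three halfspaces two are of the same kind.
lemma not_hasFacingTriple_of_subset_range_quadrant (hS : S ⊆ range quadrant) :
    ¬ HasFacingTriple S := by
  rintro ⟨a, ha, b, hb, c, hc, -, -, -, a', b', c', ha', hb', hc', hab, hac, hbc⟩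
  obtain ⟨p, rfl⟩ := hS ha
  obtain ⟨q, rfl⟩ := hS hb
  obtain ⟨r, rfl⟩ := hS hc
  rcases ha' with rfl | rfl <;> rcases hb' with rfl | rfl <;> rcases hc' with rfl | rfl <;>
    first
    | exact not_disjoint_quadrant _ _ ‹_›
    | exact not_disjoint_compl_quadrant _ _ ‹_›

end Subfamily

lemma noInfCross_range_quadrant : NoInfCross (range quadrant) := by
  intro S hS hcross
  have hanti : IsAntichain (· ≤ ·) (quadrant ⁻¹' S) := fun p hp q hq hpq hle => by
    obtain ⟨z, hzp, hzq⟩ := (hcross hp hq (quadrant_injective.ne hpq)).2.2.1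
    exact hzp (quadrant_subset_quadrant_iff.mpr hle hzq)
  have := (WellQuasiOrderedLE.finite_of_isAntichain hanti).image quadrant
  rwa [image_preimage_eq_of_subset hS] at this

lemma inseparableIn_image_quadrant_iff {T : Set (ℕ × ℕ)} :
    InseparableIn (range quadrant) (quadrant '' T) ↔ T.OrdConnected := by
  constructor
  · refine fun h => ordConnected_of_Ioo fun p hp q hq _ w ⟨hpw, hwq⟩ => ?_
    exact quadrant_injective.mem_set_image.mp <| h _ (mem_image_of_mem _ hp) _
      (mem_image_of_mem _ hq) _ (mem_range_self w) (separates_quadrant_of_lt_of_lt hpw hwq)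
  · rintro hT _ ⟨p, hp, rfl⟩ _ ⟨q, hq, rfl⟩ _ ⟨w, rfl⟩ hsep
    refine mem_image_of_mem _ ?_
    rcases lt_lt_of_separates_quadrant hsep with ⟨h₁, h₂⟩ | ⟨h₁, h₂⟩
    · exact hT.out hp hq ⟨h₁.le, h₂.le⟩
    · exact hT.out hq hp ⟨h₁.le, h₂.le⟩

lemma isUBS_image_quadrant {T : Set (ℕ × ℕ)} (hT : T.Infinite) (hconv : T.OrdConnected) :
    IsUBS (range quadrant) (quadrant '' T) :=
  have hsub : quadrant '' T ⊆ range quadrant := image_subset_range _ _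
  ⟨hsub, hT.image quadrant_injective.injOn, inseparableIn_image_quadrant_iff.mpr hconv,
    unidirectional_of_subset_range_quadrant hsub,
    not_hasFacingTriple_of_subset_range_quadrant hsub⟩

-- Any `t ∈ T` above some `t₀ ∈ T'` lies below some `t' ∈ T'`, as `T'` is infinite and
-- `Iic t` finite; convexity then puts `t` in `T'`.
theorem IsChain.finite_sdiff_of_ordConnected {α : Type*} [Preorder α] [LocallyFiniteOrderBot α]
    {T T' : Set α} (hT : IsChain (· ≤ ·) T) (hT'T : T' ⊆ T) (hinf : T'.Infinite)
    (hconv : T'.OrdConnected) : (T \ T').Finite := by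
  obtain ⟨t₀, ht₀⟩ := hinf.nonempty
  refine (finite_Iic t₀).subset fun t ⟨htT, htT'⟩ => ?_
  by_contra hle
  obtain ⟨t', ht', ht't⟩ := (hinf.sdiff (finite_Iic t)).nonempty
  have ht₀t : t₀ ≤ t := (hT.total (hT'T ht₀) htT).resolve_right hle
  have htt' : t ≤ t' := (hT.total htT (hT'T ht')).resolve_right ht't
  exact htT' (hconv.out ht₀ ht' ⟨ht₀t, htt'⟩)

lemma minUBS_image_quadrant {T : Set (ℕ × ℕ)} (hT : T.Infinite) (hconv : T.OrdConnected)
    (hchain : IsChain (· ≤ ·) T) : MinUBS (range quadrant) (quadrant '' T) := by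
  refine ⟨isUBS_image_quadrant hT hconv, fun U' hU' hsub => ?_⟩
  obtain ⟨hU'W, hU'inf, hU'insep, -⟩ := hU'
  rw [← image_preimage_eq_of_subset hU'W] at hsub hU'inf hU'insep ⊢
  have hT'T : quadrant ⁻¹' U' ⊆ T := (image_subset_image_iff quadrant_injective).mp hsub
  refine ⟨by rw [sdiff_eq_empty.mpr hsub]; exact finite_empty, ?_⟩
  rw [← image_sdiff quadrant_injective]
  exact (hchain.finite_sdiff_of_ordConnected hT'T (hU'inf.of_image _)
    (inseparableIn_image_quadrant_iff.mp hU'insep)).image _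

theorem Set.OrdConnected.prod {α β : Type*} [Preorder α] [Preorder β] {s : Set α} {t : Set β}
    (hs : s.OrdConnected) (ht : t.OrdConnected) : (s ×ˢ t).OrdConnected :=
  ⟨fun _ hx _ hy _ hz =>
    ⟨hs.out hx.1 hy.1 ⟨hz.1.1, hz.2.1⟩, ht.out hx.2 hy.2 ⟨hz.1.2, hz.2.2⟩⟩⟩

theorem IsChain.singleton_prod {α β : Type*} [Preorder α] [Preorder β] {t : Set β}
    (ht : IsChain (· ≤ ·) t) (a : α) : IsChain (· ≤ ·) ({a} ×ˢ t) := by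
  rintro ⟨_, x⟩ ⟨rfl, hx⟩ ⟨_, y⟩ ⟨rfl, hy⟩ -
  rcases ht.total hx hy with h | h
  · exact Or.inl ⟨le_rfl, h⟩
  · exact Or.inr ⟨le_rfl, h⟩

theorem IsChain.prod_singleton {α β : Type*} [Preorder α] [Preorder β] {s : Set α}
    (hs : IsChain (· ≤ ·) s) (b : β) : IsChain (· ≤ ·) (s ×ˢ {b}) := by
  rintro ⟨x, _⟩ ⟨hx, rfl⟩ ⟨y, _⟩ ⟨hy, rfl⟩ -
  rcases hs.total hx hy with h | h
  · exact Or.inl ⟨h, le_rfl⟩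
  · exact Or.inr ⟨h, le_rfl⟩

lemma not_almostEq_of_finite_inter {S T : Set (Set X)} (hS : S.Infinite) (hST : (S ∩ T).Finite) :
    ¬ AlmostEq S T := fun h => hS (sdiff_union_inter S T ▸ h.1.union hST)

/-- In infinite dimension, uniqueness of the decomposition into minimal UBSs can fail:
there is a wallspace with no infinite pairwise-crossing family, a UBS `V` that is a disjoint
union of countably infinitely many minimal UBSs `U i`, and a minimal UBS `V' ⊆ V` that is not
almost-equivalent to any `U i`. -/
theorem decomposition_uniqueness_fails_infinite_dim :
    ∃ (X : Type) (W : Set (Set X)),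
      W.Countable ∧ (∀ h ∈ W, IsWall h) ∧ Admissible W ∧ NoInfCross W ∧
      ∃ (V : Set (Set X)) (U : ℕ → Set (Set X)) (V' : Set (Set X)),
        IsUBS W V ∧
        (∀ i, MinUBS W (U i)) ∧
        Pairwise (Function.onFun Disjoint U) ∧
        V = ⋃ i, U i ∧
        MinUBS W V' ∧ V' ⊆ V ∧
        ∀ i, ¬ AlmostEq V' (U i) := by
  have hℕ : IsChain (· ≤ ·) (univ : Set ℕ) := isChain_univ_iff.mpr inferInstance
  refine ⟨ℕ × ℕ, range quadrant, countable_range _, forall_mem_range.mpr isWall_quadrant,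
    admissible_range_quadrant, noInfCross_range_quadrant, range quadrant,
    fun i => quadrant '' ({i} ×ˢ univ), quadrant '' (univ ×ˢ {0}),
    image_univ (f := quadrant) ▸ isUBS_image_quadrant infinite_univ ordConnected_univ,
    fun i => minUBS_image_quadrant (infinite_univ.prod_right (singleton_nonempty i))
      (ordConnected_singleton.prod ordConnected_univ) (hℕ.singleton_prod i),
    fun i j hij => ?_, ?_,
    minUBS_image_quadrant (infinite_univ.prod_left (singleton_nonempty 0))
      (ordConnected_univ.prod ordConnected_singleton) (hℕ.prod_singleton 0),
    image_subset_range _ _, fun i => not_almostEq_of_finite_inter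
      ((infinite_univ.prod_left (singleton_nonempty 0)).image quadrant_injective.injOn) ?_⟩
  · exact (disjoint_image_iff quadrant_injective).mpr <|
      disjoint_prod.mpr (Or.inl (disjoint_singleton.mpr hij))
  · rw [← image_iUnion, ← iUnion_prod_const, iUnion_of_singleton, univ_prod_univ, image_univ]
  · rw [← image_inter quadrant_injective, prod_inter_prod]
    exact (((finite_singleton i).inter_of_right _).prod
      ((finite_singleton 0).inter_of_left _)).image _
end
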